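/- arXiv:1311.4402 — 2 statements merged into one kernel-verified Lean document; each statement's English description precedes it below -/
import Mathlib

section
/- Under the hypotheses of the previous statement, if moreover Ω_T(ρ) ≥ M + 1 and ρ > 2M where Ω_T(ρ) = inf{G(t,r)/r : t ∈ [t₀,T], r ≥ ρ}, and |y(t₀)| > ρ, then t ↦ |y(t)| is monotonically increasing on [t₀, T], and in particular |y(t)| > ρ for all t ∈ [t₀, T]. -/
open Set MeasureTheory

/-!
Along the solution, `d/dt ‖y‖² = 2⟪y, y'⟫`, and the radial term contributes `G(t,‖y‖)‖y‖`
while the linear and forcing terms cost at most `M‖y‖² + M‖y‖`. Where `‖y‖ ≥ ρ` the bound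
`G(t,r) ≥ (M + 1) r` makes this derivative at least `2‖y‖(‖y‖ - M) > 0`, so `‖y‖` can never come
down to the level `ρ` it starts above, and it increases.
-/

theorem strictMonoOn_Icc_and_lt_of_hasDerivAt_pos_of_le {f f' : ℝ → ℝ} {a b c : ℝ}
    (hf : ∀ x ∈ Icc a b, HasDerivAt f (f' x) x) (ha : c < f a)
    (hpos : ∀ x ∈ Icc a b, c ≤ f x → 0 < f' x) :
    StrictMonoOn f (Icc a b) ∧ ∀ x ∈ Icc a b, c < f x := by
  have hcont : ContinuousOn f (Icc a b) := fun x hx => (hf x hx).continuousAt.continuousWithinAt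
  have hle : ∀ x ∈ Icc a b, c ≤ f x := by
    have := image_le_of_deriv_right_lt_deriv_boundary (f := -f) (B := fun _ => -c) (B' := 0)
      hcont.neg (fun x hx => (hf x (Ico_subset_Icc_self hx)).neg.hasDerivWithinAt)
      (neg_le_neg ha.le) (fun _ => hasDerivAt_const _ _)
      (fun x hx hfx => neg_neg_iff_pos.mpr <|
        hpos x (Ico_subset_Icc_self hx) (neg_inj.mp hfx).ge)
    exact fun x hx => neg_le_neg_iff.mp (this hx)
  have hmono : StrictMonoOn f (Icc a b) := by
    refine strictMonoOn_of_hasDerivWithinAt_pos (convex_Icc a b) hcont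
      (fun x hx => (hf x (interior_subset hx)).hasDerivWithinAt) fun x hx => ?_
    exact hpos x (interior_subset hx) (hle x (interior_subset hx))
  exact ⟨hmono, fun x hx =>
    ha.trans_le (hmono.monotoneOn (left_mem_Icc.mpr (hx.1.trans hx.2)) hx hx.1)⟩

section InnerProductSpace

variable {E : Type*} [NormedAddCommGroup E] [InnerProductSpace ℝ E]

theorem real_inner_smul_inv_norm_smul_self (c : ℝ) (x : E) :
    inner ℝ x (c • (‖x‖⁻¹ • x)) = c * ‖x‖ := by
  rcases eq_or_ne x 0 with rfl | hx
  · simp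
  · rw [real_inner_smul_right, real_inner_smul_right, real_inner_self_eq_norm_sq]
    field_simp

theorem norm_mul_sub_le_inner_radial_field {x b : E} {a : E →L[ℝ] E} {c M : ℝ}
    (ha : ‖a‖ ≤ M) (hb : ‖b‖ ≤ M) (hc : (M + 1) * ‖x‖ ≤ c) :
    ‖x‖ * (‖x‖ - M) ≤ inner ℝ x (c • (‖x‖⁻¹ • x) + a x + b) := by
  have hlin : -(M * ‖x‖ ^ 2) ≤ inner ℝ x (a x) := by
    refine neg_le_of_abs_le ((abs_real_inner_le_norm _ _).trans ?_)
    calc ‖x‖ * ‖a x‖ ≤ ‖x‖ * (M * ‖x‖) := by gcongr; exact a.le_of_opNorm_le ha x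
      _ = M * ‖x‖ ^ 2 := by ring
  have hforce : -(M * ‖x‖) ≤ inner ℝ x b := by
    refine neg_le_of_abs_le ((abs_real_inner_le_norm _ _).trans ?_)
    rw [mul_comm M]
    gcongr
  rw [inner_add_right, inner_add_right, real_inner_smul_inv_norm_smul_self]
  nlinarith [norm_nonneg x]

end InnerProductSpace

theorem norm_increasing_of_radial_ode_general
    {n : ℕ} (t₀ T : ℝ)
    (G : ℝ → ℝ → ℝ) (A : ℝ → EuclideanSpace ℝ (Fin n) →L[ℝ] EuclideanSpace ℝ (Fin n))
    (g : ℝ → EuclideanSpace ℝ (Fin n))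
    (y : ℝ → EuclideanSpace ℝ (Fin n))
    (M ρ : ℝ) (hM0 : 0 ≤ M)
    (hM : ∀ t ∈ Icc t₀ T, ‖g t‖ ≤ M ∧ ‖A t‖ ≤ M)
    (hρ : ρ > 2 * M)
    (hΩ : ∀ t ∈ Icc t₀ T, ∀ r : ℝ, ρ ≤ r → M + 1 ≤ G t r / r)
    (hy0 : ‖y t₀‖ > ρ)
    (hy : ∀ t ∈ Icc t₀ T,
      HasDerivAt y (G t ‖y t‖ • (‖y t‖⁻¹ • y t) + A t (y t) + g t) t) :
    MonotoneOn (fun t => ‖y t‖) (Icc t₀ T) ∧ ∀ t ∈ Icc t₀ T, ‖y t‖ > ρ := by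
  have hpos : ∀ t ∈ Icc t₀ T, ρ ≤ ‖y t‖ →
      0 < inner ℝ (y t) (G t ‖y t‖ • (‖y t‖⁻¹ • y t) + A t (y t) + g t) := by
    intro t ht hρy
    have hG : (M + 1) * ‖y t‖ ≤ G t ‖y t‖ :=
      (le_div_iff₀ (by linarith)).mp (hΩ t ht _ hρy)
    calc 0 < ‖y t‖ * (‖y t‖ - M) := mul_pos (by linarith) (by linarith)
      _ ≤ _ := norm_mul_sub_le_inner_radial_field (hM t ht).2 (hM t ht).1 hG
  have hρ0 : 0 ≤ ρ := by linarith
  obtain ⟨hmono, hgt⟩ := strictMonoOn_Icc_and_lt_of_hasDerivAt_pos_of_le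
    (fun t ht => (hy t ht).norm_sq) (c := ρ ^ 2) (by gcongr)
    fun t ht hρy => mul_pos two_pos (hpos t ht (pow_le_pow_iff_left₀ hρ0 (norm_nonneg _)
      two_ne_zero |>.mp hρy))
  refine ⟨fun s hs t ht hst => ?_, fun t ht => ?_⟩
  · exact (pow_le_pow_iff_left₀ (norm_nonneg _) (norm_nonneg _) two_ne_zero).mp
      (hmono.monotoneOn hs ht hst)
  · exact lt_of_pow_lt_pow_left₀ 2 (norm_nonneg _) (hgt t ht)

/-- If `y` solves `y' = G(t,|y|)y/|y| + A(t)y + g(t)` on `[t₀,T]` with `‖y(t₀)‖ > ρ`,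
where `ρ > 2M` and `Ω_T(ρ) = inf{G(t,r)/r : t ∈ [t₀,T], r ≥ ρ} ≥ M + 1` with `M` an
essential bound for `‖g‖` and `‖A‖`, then `t ↦ ‖y(t)‖` is monotonically increasing on
`[t₀,T]`; in particular `‖y(t)‖ > ρ` on `[t₀,T]`. -/
theorem norm_increasing_of_radial_ode
    {n : ℕ} (t₀ T : ℝ) (ht : t₀ < T)
    (G : ℝ → ℝ → ℝ) (A : ℝ → EuclideanSpace ℝ (Fin n) →L[ℝ] EuclideanSpace ℝ (Fin n))
    (g : ℝ → EuclideanSpace ℝ (Fin n))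
    (y : ℝ → EuclideanSpace ℝ (Fin n))
    (M ρ : ℝ) (hM0 : 0 ≤ M)
    (hM : ∀ t ∈ Icc t₀ T, ‖g t‖ ≤ M ∧ ‖A t‖ ≤ M)
    (hρ : ρ > 2 * M)
    (hΩ : ∀ t ∈ Icc t₀ T, ∀ r : ℝ, ρ ≤ r → M + 1 ≤ G t r / r)
    (hynz : ∀ t ∈ Icc t₀ T, ‖y t‖ > 0)
    (hy0 : ‖y t₀‖ > ρ)
    (hy : ∀ t ∈ Icc t₀ T,
      HasDerivAt y (G t ‖y t‖ • (‖y t‖⁻¹ • y t) + A t (y t) + g t) t) :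
    MonotoneOn (fun t => ‖y t‖) (Icc t₀ T) ∧ ∀ t ∈ Icc t₀ T, ‖y t‖ > ρ :=
  norm_increasing_of_radial_ode_general t₀ T G A g y M ρ hM0 hM hρ hΩ hy0 hy
end

section
/- Let y : [0, T̄) → ℝⁿ be a solution of (1/2)(d/dt)|y(t)|² ≤ (G(t,|y(t)|)/|y(t)| + M)|y(t)|² + M|y(t)| with lim_{t→T̄⁻} |y(t)| = +∞ and T̄ < ∞. Then ∫₀^t (G(s,|y(s)|)/|y(s)| + M) ds → +∞ as t → T̄⁻. -/
open Set MeasureTheory Filter intervalIntegral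
open Real Topology

/-! Where `|y| ≥ 1`, the term `M |y|` is absorbed into `M |y|²`, so `(log |y|²)' ≤ 2 (g + M)`
with `g = G(t,|y|)/|y| + M`. Integrating, `log |y(t)|²` is bounded by `2 ∫ g` plus a term that
stays bounded because `T̄ < ∞`; as `|y(t)| → ∞`, so does `∫ g`. -/

theorem log_sub_log_le_integral_of_deriv_le_mul {u g : ℝ → ℝ} {a b : ℝ} (hab : a ≤ b)
    (hu : ∀ x ∈ Icc a b, DifferentiableAt ℝ u x) (hpos : ∀ x ∈ Icc a b, 0 < u x)
    (hderiv : ∀ x ∈ Ioo a b, deriv u x ≤ g x * u x) (hg : IntervalIntegrable g volume a b) :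
    log (u b) - log (u a) ≤ ∫ x in a..b, g x := by
  have hlog : ∀ x ∈ Icc a b, HasDerivAt (fun t => log (u t)) ((u x)⁻¹ * deriv u x) x :=
    fun x hx => (hasDerivAt_log (hpos x hx).ne').comp x (hu x hx).hasDerivAt
  refine sub_le_integral_of_hasDeriv_right_of_le hab
    (fun x hx => (hlog x hx).continuousAt.continuousWithinAt)
    (fun x hx => (hlog x (Ioo_subset_Icc_self hx)).hasDerivWithinAt)
    ((intervalIntegrable_iff_integrableOn_Icc_of_le hab).1 hg) fun x hx => ?_
  rw [inv_mul_le_iff₀ (hpos x (Ioo_subset_Icc_self hx)), mul_comm]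
  exact hderiv x hx

theorem tendsto_integral_atTop_of_deriv_le_mul {u g : ℝ → ℝ} {a b : ℝ} (hab : a < b)
    (hu : ∀ x ∈ Ico a b, DifferentiableAt ℝ u x) (hpos : ∀ x ∈ Ico a b, 0 < u x)
    (hderiv : ∀ x ∈ Ico a b, deriv u x ≤ g x * u x)
    (hg : ∀ t ∈ Ico a b, IntervalIntegrable g volume a t)
    (hblow : Tendsto u (𝓝[<] b) atTop) :
    Tendsto (fun t => ∫ x in a..t, g x) (𝓝[<] b) atTop := by
  have hlog : Tendsto (fun t => log (u t) - log (u a)) (𝓝[<] b) atTop :=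
    tendsto_atTop_add_const_right _ _ (tendsto_log_atTop.comp hblow)
  refine tendsto_atTop_mono' _ ?_ hlog
  filter_upwards [Ico_mem_nhdsLT hab] with t ht
  have hsub : Icc a t ⊆ Ico a b := Icc_subset_Ico_right ht.2
  exact log_sub_log_le_integral_of_deriv_le_mul ht.1 (fun x hx => hu x (hsub hx))
    (fun x hx => hpos x (hsub hx)) (fun x hx => hderiv x (hsub (Ioo_subset_Icc_self hx)))
    (hg t ht)

theorem integral_diverges_at_blowup_general
    {n : ℕ} (Tb : ℝ) (hTb : 0 < Tb) (M : ℝ) (hM : 0 ≤ M)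
    (G : ℝ → ℝ → ℝ)
    (y : ℝ → EuclideanSpace ℝ (Fin n))
    (hyderiv : ∀ t ∈ Ico (0:ℝ) Tb,
      DifferentiableAt ℝ (fun s => ‖y s‖ ^ 2) t ∧
      deriv (fun s => ‖y s‖ ^ 2) t / 2 ≤
        (G t ‖y t‖ / ‖y t‖ + M) * ‖y t‖ ^ 2 + M * ‖y t‖)
    (hint : ∀ t ∈ Ico (0:ℝ) Tb,
      IntervalIntegrable (fun s => G s ‖y s‖ / ‖y s‖ + M) MeasureTheory.volume 0 t)
    (hblow : Tendsto (fun t => ‖y t‖) (nhdsWithin Tb (Iio Tb)) atTop) :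
    Tendsto (fun t => ∫ s in (0:ℝ)..t, (G s ‖y s‖ / ‖y s‖ + M))
      (nhdsWithin Tb (Iio Tb)) atTop := by
  set g : ℝ → ℝ := fun s => G s ‖y s‖ / ‖y s‖ + M
  obtain ⟨t₀, ht₀Tb, ht₀⟩ := mem_nhdsLT_iff_exists_Ico_subset.1
    (inter_mem (hblow.eventually_ge_atTop 1) (Ioo_mem_nhdsLT hTb))
  have hy : ∀ t ∈ Ico t₀ Tb, 1 ≤ ‖y t‖ ∧ t ∈ Ico 0 Tb := fun t ht =>
    ⟨(ht₀ ht).1, (ht₀ ht).2.1.le, ht.2⟩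
  have ht₀pos : 0 < t₀ := (ht₀ ⟨le_rfl, ht₀Tb⟩).2.1
  have hgint : ∀ t ∈ Ico t₀ Tb, IntervalIntegrable g volume t₀ t := fun t ht =>
    (hint t₀ ⟨ht₀pos.le, ht₀Tb⟩).symm.trans (hint t (hy t ht).2)
  have hdiverge : Tendsto (fun t => ∫ s in t₀..t, 2 * (g s + M)) (𝓝[<] Tb) atTop := by
    refine tendsto_integral_atTop_of_deriv_le_mul ht₀Tb (fun x hx => (hyderiv x (hy x hx).2).1)
      (fun x hx => pow_pos (one_pos.trans_le (hy x hx).1) 2) (fun x hx => ?_)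
      (fun t ht => ((hgint t ht).add intervalIntegrable_const).const_mul 2)
      ((tendsto_pow_atTop two_ne_zero).comp hblow)
    obtain ⟨hy1, hx⟩ := hy x hx
    nlinarith [(hyderiv x hx).2, mul_nonneg hM (sub_nonneg.2 hy1)]
  have hshift : Tendsto (fun t => (∫ s in (0:ℝ)..t₀, g s) - M * (t - t₀)) (𝓝[<] Tb)
      (𝓝 ((∫ s in (0:ℝ)..t₀, g s) - M * (Tb - t₀))) :=
    (Continuous.tendsto (by fun_prop) Tb).mono_left nhdsWithin_le_nhds
  refine (hshift.add_atTop (hdiverge.atTop_div_const two_pos)).congr' ?_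
  filter_upwards [Ico_mem_nhdsLT ht₀Tb] with t ht
  rw [← integral_add_adjacent_intervals (hint t₀ ⟨ht₀pos.le, ht₀Tb⟩) (hgint t ht),
    intervalIntegral.integral_const_mul, integral_add (hgint t ht) intervalIntegrable_const,
    intervalIntegral.integral_const, smul_eq_mul]
  ring

/-- If `y : [0,T̄) → ℝⁿ` satisfies
`(1/2) d/dt |y(t)|² ≤ (G(t,|y(t)|)/|y(t)| + M)|y(t)|² + M|y(t)|` and `|y(t)| → ∞` as
`t → T̄⁻` with `T̄ < ∞`, then `∫₀^t (G(s,|y(s)|)/|y(s)| + M) ds → +∞` as `t → T̄⁻`. -/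
theorem integral_diverges_at_blowup
    {n : ℕ} (Tb : ℝ) (hTb : 0 < Tb) (M : ℝ) (hM : 0 ≤ M)
    (G : ℝ → ℝ → ℝ)
    (y : ℝ → EuclideanSpace ℝ (Fin n))
    (hycont : ContinuousOn y (Ico 0 Tb))
    (hynz : ∀ t ∈ Ico (0:ℝ) Tb, ‖y t‖ > 0)
    (hyderiv : ∀ t ∈ Ico (0:ℝ) Tb,
      DifferentiableAt ℝ (fun s => ‖y s‖ ^ 2) t ∧
      deriv (fun s => ‖y s‖ ^ 2) t / 2 ≤
        (G t ‖y t‖ / ‖y t‖ + M) * ‖y t‖ ^ 2 + M * ‖y t‖)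
    (hint : ∀ t ∈ Ico (0:ℝ) Tb,
      IntervalIntegrable (fun s => G s ‖y s‖ / ‖y s‖ + M) MeasureTheory.volume 0 t)
    (hblow : Tendsto (fun t => ‖y t‖) (nhdsWithin Tb (Iio Tb)) atTop) :
    Tendsto (fun t => ∫ s in (0:ℝ)..t, (G s ‖y s‖ / ‖y s‖ + M))
      (nhdsWithin Tb (Iio Tb)) atTop :=
  integral_diverges_at_blowup_general Tb hTb M hM G y hyderiv hint hblow
end
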